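/- arXiv:1211.5384 — 3 statements merged into one kernel-verified Lean document; each statement's English description precedes it below -/
import Mathlib

section
/- Let 0 < α < 1 and define the quadrature weights w_{j,k} by: w_{j,0} = ((j-1)^{α+1} - (j-α-1) j^α)/(α(α+1)), w_{j,k} = ((j-k-1)^{α+1} - 2(j-k)^{α+1} + (j-k+1)^{α+1})/(α(α+1)) for 1 ≤ k < j, and w_{j,j} = 1/(α(α+1)). Then for a piecewise-linear function φ on [0, j] with nodes at integers and values φ(k), the exact integral ∫₀ʲ (j - s)^{α-1} φ(s) ds equals Σ_{k=0}^{j} w_{j,k} φ(k). -/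
open Real intervalIntegral Finset
open MeasureTheory (volume)

/-! On each cell `[k, k + 1]` the function `φ` is affine, so after the substitution `u = j - s`
its integral against the kernel only involves the antiderivatives `u ^ α / α` and
`u ^ (α + 1) / (α + 1)`; it equals `φ k * L (j - k) + φ (k + 1) * R (j - k)`.
Collecting the coefficient of each node, an interior node gets `L t + R (t + 1)` with `t = j - k`,
where the `u ^ α` terms cancel and a second difference of `u ^ (α + 1) / (α * (α + 1))` remains;
the end nodes receive only `L j` and `R 1`. -/

/- `L` and `R`: with `t = j - k`, the integrals of `(j - s) ^ (α - 1)` against the two halves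
`k + 1 - s` and `s - k` of the hat functions on the cell `[k, k + 1]`. -/
noncomputable def cellWeightLeft (α t : ℝ) : ℝ :=
  t ^ α / α - (t ^ (α + 1) - (t - 1) ^ (α + 1)) / (α * (α + 1))

noncomputable def cellWeightRight (α t : ℝ) : ℝ :=
  (t ^ (α + 1) - (t - 1) ^ (α + 1)) / (α * (α + 1)) - (t - 1) ^ α / α

section
variable {α : ℝ}

lemma integral_rpow_sub_one_mul_affine (hα : 0 < α) {a b : ℝ} (ha : 0 ≤ a) (hab : a ≤ b)
    (p q : ℝ) :
    ∫ u in a..b, u ^ (α - 1) * (p + q * u) =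
      p * ((b ^ α - a ^ α) / α) + q * ((b ^ (α + 1) - a ^ (α + 1)) / (α + 1)) := by
  have hsplit : Set.EqOn (fun u => u ^ (α - 1) * (p + q * u))
      (fun u => p * u ^ (α - 1) + q * u ^ α) (Set.uIcc a b) := by
    intro u hu
    rw [Set.uIcc_of_le hab] at hu
    have hpow : u ^ α = u ^ (α - 1) * u := by
      rw [← rpow_add_one' (ha.trans hu.1) (by linarith), sub_add_cancel]
    simp only [hpow]
    ring
  rw [integral_congr hsplit, intervalIntegral.integral_add, integral_const_mul, integral_const_mul,
    integral_rpow (Or.inl (by linarith)), integral_rpow (Or.inl (by linarith)), sub_add_cancel]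
  · exact (intervalIntegrable_rpow' (by linarith)).const_mul p
  · exact (intervalIntegrable_rpow' (by linarith)).const_mul q

lemma eqOn_sub_rpow_mul_of_affineOn {j k : ℝ} {φ : ℝ → ℝ}
    (hφ : ∀ s ∈ Set.Icc k (k + 1), φ s = φ k + (s - k) * (φ (k + 1) - φ k)) :
    Set.EqOn (fun s => (j - s) ^ (α - 1) * φ s)
      (fun s => (j - s) ^ (α - 1) * (φ k + (s - k) * (φ (k + 1) - φ k))) (Set.Icc k (k + 1)) :=
  fun s hs => by simp only [hφ s hs]

lemma intervalIntegrable_sub_rpow_mul_of_affineOn (hα : 0 < α) (j : ℝ) {k : ℝ} {φ : ℝ → ℝ}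
    (hφ : ∀ s ∈ Set.Icc k (k + 1), φ s = φ k + (s - k) * (φ (k + 1) - φ k)) :
    IntervalIntegrable (fun s => (j - s) ^ (α - 1) * φ s) volume k (k + 1) := by
  have hker := (intervalIntegrable_rpow' (r := α - 1) (a := j - k) (b := j - (k + 1))
    (by linarith)).comp_sub_left j
  simp only [sub_sub_cancel] at hker
  rw [intervalIntegrable_congr ((eqOn_sub_rpow_mul_of_affineOn hφ).mono ?_)]
  · exact hker.mul_continuousOn (by fun_prop)
  · rw [Set.uIoc_of_le (by linarith)]
    exact Set.Ioc_subset_Icc_self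

lemma integral_sub_rpow_mul_of_affineOn (hα : 0 < α) {j k : ℝ} (hkj : k + 1 ≤ j) {φ : ℝ → ℝ}
    (hφ : ∀ s ∈ Set.Icc k (k + 1), φ s = φ k + (s - k) * (φ (k + 1) - φ k)) :
    ∫ s in k..k + 1, (j - s) ^ (α - 1) * φ s =
      φ k * cellWeightLeft α (j - k) + φ (k + 1) * cellWeightRight α (j - k) := by
  set d := φ (k + 1) - φ k
  have hsub := integral_comp_sub_left (a := k) (b := k + 1)
    (fun u => u ^ (α - 1) * (φ k + (j - k) * d + -d * u)) j
  have haffine : (fun s => (j - s) ^ (α - 1) * (φ k + (j - k) * d + -d * (j - s))) =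
      fun s => (j - s) ^ (α - 1) * (φ k + (s - k) * d) := by
    funext s; ring
  rw [haffine] at hsub
  rw [integral_congr
      ((eqOn_sub_rpow_mul_of_affineOn hφ).mono (Set.uIcc_of_le (by linarith)).subset), hsub,
    integral_rpow_sub_one_mul_affine hα (by linarith) (by linarith),
    show φ (k + 1) = φ k + d by ring, cellWeightLeft, cellWeightRight,
    show j - (k + 1) = j - k - 1 by ring,
    rpow_add_one' (by linarith : 0 ≤ j - k) (by linarith),
    rpow_add_one' (by linarith : 0 ≤ j - k - 1) (by linarith)]
  field_simp
  ring

lemma cellWeightLeft_eq (hα : 0 < α) {t : ℝ} (ht : 0 ≤ t) :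
    cellWeightLeft α t = ((t - 1) ^ (α + 1) - (t - α - 1) * t ^ α) / (α * (α + 1)) := by
  rw [cellWeightLeft, rpow_add_one' ht (by linarith)]
  field_simp
  ring

lemma cellWeightRight_one (hα : 0 < α) : cellWeightRight α 1 = 1 / (α * (α + 1)) := by
  simp [cellWeightRight, zero_rpow hα.ne', zero_rpow (by linarith : α + 1 ≠ 0)]

lemma cellWeightLeft_add_cellWeightRight_add_one (t : ℝ) :
    cellWeightLeft α t + cellWeightRight α (t + 1) =
      ((t - 1) ^ (α + 1) - 2 * t ^ (α + 1) + (t + 1) ^ (α + 1)) / (α * (α + 1)) := by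
  rw [cellWeightLeft, cellWeightRight, add_sub_cancel_right]
  ring

end

lemma Finset.sum_range_mul_add_mul_succ {R : Type*} [CommSemiring R] (a b x : ℕ → R) {n : ℕ}
    (hn : 0 < n) :
    ∑ k ∈ range n, (x k * a k + x (k + 1) * b k) =
      ∑ k ∈ range (n + 1),
        (if k = 0 then a 0 else if k = n then b (n - 1) else a k + b (k - 1)) * x k := by
  obtain ⟨m, rfl⟩ := Nat.exists_eq_add_one_of_ne_zero hn.ne'
  have hinterior : ∀ i ∈ range m,
      (if i + 1 = 0 then a 0
        else if i + 1 = m + 1 then b (m + 1 - 1) else a (i + 1) + b (i + 1 - 1))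
        * x (i + 1) = x (i + 1) * a (i + 1) + x (i + 1) * b i := by
    intro i hi
    rw [if_neg i.succ_ne_zero, if_neg (by simp at hi; omega), Nat.add_sub_cancel]
    ring
  rw [sum_add_distrib, sum_range_succ' (fun k => x k * a k),
    sum_range_succ (fun k => x (k + 1) * b k)]
  conv_rhs => rw [sum_range_succ _ (m + 1), sum_range_succ', sum_congr rfl hinterior, if_pos rfl,
    if_neg m.succ_ne_zero, if_pos rfl, Nat.add_sub_cancel, sum_add_distrib]
  ring

theorem abel_quadrature_weights_exact_general (α : ℝ) (hα0 : 0 < α)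
    (j : ℕ) (hj : 1 ≤ j) (φ : ℝ → ℝ)
    (hφlin : ∀ k : ℕ, k < j → ∀ s ∈ Set.Icc (k : ℝ) ((k : ℝ) + 1),
      φ s = φ (k : ℝ) + (s - (k : ℝ)) * (φ ((k : ℝ) + 1) - φ (k : ℝ))) :
    ∫ s in (0 : ℝ)..(j : ℝ), ((j : ℝ) - s) ^ (α - 1) * φ s =
      ∑ k ∈ Finset.range (j + 1),
        (if k = 0 then
            (((j : ℝ) - 1) ^ (α + 1) - ((j : ℝ) - α - 1) * (j : ℝ) ^ α) / (α * (α + 1))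
          else if k = j then 1 / (α * (α + 1))
          else (((j : ℝ) - k - 1) ^ (α + 1) - 2 * ((j : ℝ) - k) ^ (α + 1)
              + ((j : ℝ) - k + 1) ^ (α + 1)) / (α * (α + 1))) * φ (k : ℝ) := by
  calc ∫ s in (0 : ℝ)..(j : ℝ), ((j : ℝ) - s) ^ (α - 1) * φ s
      = ∑ k ∈ range j, ∫ s in (k : ℝ)..(k + 1 : ℕ), ((j : ℝ) - s) ^ (α - 1) * φ s := by
        rw [sum_integral_adjacent_intervals, Nat.cast_zero]
        intro k hk
        rw [Nat.cast_succ]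
        exact intervalIntegrable_sub_rpow_mul_of_affineOn hα0 _ (hφlin k hk)
    _ = ∑ k ∈ range j, (φ k * cellWeightLeft α (j - k)
          + φ (k + 1 : ℕ) * cellWeightRight α (j - k)) := by
        refine sum_congr rfl fun k hk => ?_
        have hkj : (k : ℝ) + 1 ≤ j := by exact_mod_cast mem_range.mp hk
        rw [Nat.cast_succ, integral_sub_rpow_mul_of_affineOn hα0 hkj (hφlin k (mem_range.mp hk))]
    _ = _ := by
        rw [sum_range_mul_add_mul_succ _ _ (fun k : ℕ => φ k) hj]
        refine sum_congr rfl fun k _ => ?_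
        congr 1
        split_ifs with hk0
        · rw [Nat.cast_zero, sub_zero, cellWeightLeft_eq hα0 (Nat.cast_nonneg j)]
        · rw [Nat.cast_pred hj, sub_sub_cancel, cellWeightRight_one hα0]
        · rw [Nat.cast_pred (Nat.pos_of_ne_zero hk0), ← sub_add,
            cellWeightLeft_add_cellWeightRight_add_one]

theorem abel_quadrature_weights_exact (α : ℝ) (hα0 : 0 < α) (hα1 : α < 1)
    (j : ℕ) (hj : 1 ≤ j) (φ : ℝ → ℝ)
    (hφc : ContinuousOn φ (Set.Icc 0 (j : ℝ)))
    (hφlin : ∀ k : ℕ, k < j → ∀ s ∈ Set.Icc (k : ℝ) ((k : ℝ) + 1),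
      φ s = φ (k : ℝ) + (s - (k : ℝ)) * (φ ((k : ℝ) + 1) - φ (k : ℝ))) :
    ∫ s in (0 : ℝ)..(j : ℝ), ((j : ℝ) - s) ^ (α - 1) * φ s =
      ∑ k ∈ Finset.range (j + 1),
        (if k = 0 then
            (((j : ℝ) - 1) ^ (α + 1) - ((j : ℝ) - α - 1) * (j : ℝ) ^ α) / (α * (α + 1))
          else if k = j then 1 / (α * (α + 1))
          else (((j : ℝ) - k - 1) ^ (α + 1) - 2 * ((j : ℝ) - k) ^ (α + 1)
              + ((j : ℝ) - k + 1) ^ (α + 1)) / (α * (α + 1))) * φ (k : ℝ) :=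
  abel_quadrature_weights_exact_general α hα0 j hj φ hφlin
end

section
/- Let n = 2^d and let a ∈ ℝ^{2^d} have a tensor-train (QTT) representation a(k) = A⁽¹⁾_{k₁} A⁽²⁾_{k₂} ⋯ A⁽ᵈ⁾_{k_d}, where k = Σ_{p=1}^d k_p 2^{p-1} with k_p ∈ {0,1} and A⁽ᵖ⁾_{k_p} are matrices of compatible sizes r_{p-1} × r_p with r₀ = r_d = 1. Then the shifted vector b = [x, a(0), a(1), ..., a(2^d - 2)]ᵀ has a QTT representation b(k) = B⁽¹⁾_{k₁} ⋯ B⁽ᵈ⁾_{k_d} with cores: B⁽¹⁾₀ = [0 1], B⁽¹⁾₁ = [A⁽¹⁾₀ 0], B⁽ᵖ⁾₀ = [[A⁽ᵖ⁾₀, 0], [0, 1]], B⁽ᵖ⁾₁ = [[A⁽ᵖ⁾₁, 0], [b_p, 0]] for 2 ≤ p ≤ d-1, B⁽ᵈ⁾₀ = [[A⁽ᵈ⁾₀], [x]], B⁽ᵈ⁾₁ = [[A⁽ᵈ⁾₁], [b_d]], where b_q = A⁽¹⁾₁ A⁽²⁾₁ ⋯ A⁽q-1⁾₁ A⁽q⁾₀.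 In particular, the QTT ranks of b exceed those of a by at most 1. -/
/-- Product `M₀ M₁ ⋯ M_{d-1}` of a chain of matrices of compatible sizes
(tensor-train core product). -/
noncomputable def ttProd (ι : ℕ → Type) [∀ p, Fintype (ι p)] [∀ p, DecidableEq (ι p)] :
    (d : ℕ) → ((p : ℕ) → p < d → Matrix (ι p) (ι (p + 1)) ℝ) → Matrix (ι 0) (ι d) ℝ
  | 0, _ => 1
  | d + 1, A => ttProd ι d (fun p hp => A p (Nat.lt_succ_of_lt hp)) * A d (Nat.lt_succ_self d)

/-- The `p`-th binary digit (little-endian) of `k`. -/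
def qttBit (p k : ℕ) : Fin 2 := ⟨k / 2 ^ p % 2, Nat.mod_lt _ (by norm_num)⟩

/-!
Since `b (k + 1) = a k`, the new cores must read the digits of `k` and multiply the cores of `a`
along the digits of `k - 1`. Subtracting one turns the trailing zero digits of `k` into ones and its
lowest digit one into a zero, so the extra rank-one channel carries a pending borrow: the product of
the first `q + 1` cores is `[0 | 1]` while all digits read so far are zero, and
`[(cores of a along the low digits of k - 1) | 0]` afterwards. The core that reads the first digit
one resolves the borrow by emitting `b_{q+2}`, the product of the cores of `a` along the digits
`1, …, 1, 0`; for `k = 0` the borrow is never resolved and the last core emits `x`.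
-/

@[simp]
theorem qttBit_zero_right (p : ℕ) : qttBit p 0 = 0 := by
  simp [qttBit]

theorem qttBit_succ_of_dvd {p j : ℕ} (h : 2 ^ p ∣ j + 1) : qttBit p (j + 1) = qttBit p j + 1 := by
  ext
  simp only [qttBit, Fin.val_add, Nat.succ_div_of_dvd h, Fin.val_one]
  omega

theorem qttBit_succ_of_not_dvd {p j : ℕ} (h : ¬2 ^ p ∣ j + 1) : qttBit p (j + 1) = qttBit p j := by
  simp only [qttBit, Nat.succ_div_of_not_dvd h]

theorem two_pow_succ_dvd_iff (p k : ℕ) : 2 ^ (p + 1) ∣ k ↔ 2 ^ p ∣ k ∧ qttBit p k = 0 := by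
  have hbit : qttBit p k = 0 ↔ 2 ∣ k / 2 ^ p := by
    simp [qttBit, Fin.ext_iff, Nat.dvd_iff_mod_eq_zero]
  rw [hbit, pow_succ]
  constructor
  · intro h
    have hp : 2 ^ p ∣ k := (Dvd.intro _ rfl).trans h
    exact ⟨hp, (Nat.dvd_div_iff_mul_dvd hp).2 h⟩
  · rintro ⟨hp, h⟩
    exact (Nat.dvd_div_iff_mul_dvd hp).1 h

theorem qttBit_of_two_pow_dvd_succ {q j : ℕ} (hdvd : 2 ^ (q + 1) ∣ j + 1)
    (hbit : qttBit (q + 1) (j + 1) = 1) {p : ℕ} (hp : p ≤ q + 1) :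
    qttBit p j = if p = q + 1 then 0 else 1 := by
  split_ifs with hpq
  · subst hpq
    have := qttBit_succ_of_dvd hdvd
    omega
  · have hlow : 2 ^ (p + 1) ∣ j + 1 :=
      (Nat.pow_dvd_pow 2 (by omega)).trans hdvd
    obtain ⟨hp, hzero⟩ := (two_pow_succ_dvd_iff p (j + 1)).1 hlow
    have := qttBit_succ_of_dvd hp
    omega

section ttProd

variable (ι : ℕ → Type) [∀ p, Fintype (ι p)] [∀ p, DecidableEq (ι p)]

theorem ttProd_succ (d : ℕ) (A : (p : ℕ) → p < d + 1 → Matrix (ι p) (ι (p + 1)) ℝ) :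
    ttProd ι (d + 1) A =
      ttProd ι d (fun p hp => A p (Nat.lt_succ_of_lt hp)) * A d (Nat.lt_succ_self d) :=
  rfl

theorem ttProd_congr {d : ℕ} {A B : (p : ℕ) → p < d → Matrix (ι p) (ι (p + 1)) ℝ}
    (h : ∀ p hp, A p hp = B p hp) : ttProd ι d A = ttProd ι d B := by
  congr
  funext p hp
  exact h p hp

end ttProd

namespace QTTShift

variable {ι : ℕ → Type} [∀ p, Fintype (ι p)] [∀ p, DecidableEq (ι p)]
  (A : (p : ℕ) → Fin 2 → Matrix (ι p) (ι (p + 1)) ℝ)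

open Matrix

noncomputable def coreProd (n k : ℕ) : Matrix (ι 0) (ι n) ℝ :=
  ttProd ι n (fun p _ => A p (qttBit p k))

noncomputable def borrowRow (q : ℕ) : Matrix (ι 0) (ι (q + 2)) ℝ :=
  ttProd ι (q + 2) (fun p _ => A p (if p = q + 1 then 0 else 1))

noncomputable def firstCore (k : ℕ) : Matrix (ι 0) (ι 1 ⊕ Unit) ℝ :=
  of fun i jc =>
    if qttBit 0 k = 0 then Sum.elim (fun _ => (0 : ℝ)) (fun _ => 1) jc
    else Sum.elim (fun j => A 0 0 i j) (fun _ => 0) jc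

noncomputable def prefixRow (q k : ℕ) : Matrix (ι 0) (ι (q + 1) ⊕ Unit) ℝ :=
  if 2 ^ (q + 1) ∣ k then fromCols 0 (of fun _ _ => 1) else fromCols (coreProd A (q + 1) (k - 1)) 0

theorem coreProd_succ (n k : ℕ) : coreProd A (n + 1) k = coreProd A n k * A n (qttBit n k) :=
  rfl

theorem coreProd_eq_borrowRow {q j : ℕ} (hdvd : 2 ^ (q + 1) ∣ j + 1)
    (hbit : qttBit (q + 1) (j + 1) = 1) : coreProd A (q + 2) j = borrowRow A q :=
  ttProd_congr ι fun p hp => by rw [qttBit_of_two_pow_dvd_succ hdvd hbit (by omega)]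

theorem firstCore_eq_prefixRow (k : ℕ) : firstCore A k = prefixRow A 0 k := by
  have hbit := two_pow_succ_dvd_iff 0 k
  simp only [zero_add, pow_one, pow_zero, one_dvd, true_and] at hbit
  by_cases h : qttBit 0 k = 0
  · ext i (l | u) <;> simp [firstCore, prefixRow, h, hbit.2 h]
  · obtain _ | j := k
    · simp at h
    · have hj : qttBit 0 j = 0 := by
        have := qttBit_succ_of_dvd (p := 0) (j := j) (by simp)
        omega
      ext i (l | u) <;> simp [firstCore, prefixRow, h, mt hbit.1 h, coreProd, ttProd, hj]

variable [Unique (ι 0)]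

noncomputable def middleCore (q k : ℕ) : Matrix (ι (q + 1) ⊕ Unit) (ι (q + 2) ⊕ Unit) ℝ :=
  if qttBit (q + 1) k = 0 then fromBlocks (A (q + 1) 0) 0 0 1
  else fromBlocks (A (q + 1) 1) 0 (of fun _ j => borrowRow A q default j) 0

noncomputable def lastCore (e : ℕ) (x : ℝ) (k : ℕ) : Matrix (ι (e + 1) ⊕ Unit) (ι (e + 2)) ℝ :=
  of fun ic j =>
    if qttBit (e + 1) k = 0 then Sum.elim (fun i => A (e + 1) 0 i j) (fun _ => x) ic
    else Sum.elim (fun i => A (e + 1) 1 i j) (fun _ => borrowRow A e default j) ic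

theorem prefixRow_mul_middleCore (q k : ℕ) :
    prefixRow A q k * middleCore A q k = prefixRow A (q + 1) k := by
  have hsplit := two_pow_succ_dvd_iff (q + 1) k
  unfold prefixRow middleCore
  by_cases hdvd : 2 ^ (q + 1) ∣ k
  · by_cases hbit : qttBit (q + 1) k = 0
    · simp [hdvd, hbit, hsplit.2 ⟨hdvd, hbit⟩, fromCols_mul_fromBlocks]
    · obtain _ | j := k
      · simp at hbit
      have hbit' : qttBit (q + 1) (j + 1) = 1 := by omega
      rw [if_pos hdvd, if_neg hbit, if_neg (fun h => hbit (hsplit.1 h).2),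
        fromCols_mul_fromBlocks, Nat.add_sub_cancel, coreProd_eq_borrowRow A hdvd hbit']
      ext i (l | u) <;> simp [mul_apply, Unique.eq_default i]
  · obtain _ | j := k
    · simp at hdvd
    rw [if_neg hdvd, if_neg (fun h => hdvd (hsplit.1 h).1), Nat.add_sub_cancel,
      coreProd_succ A (q + 1), qttBit_succ_of_not_dvd hdvd]
    rcases (by omega : qttBit (q + 1) j = 0 ∨ qttBit (q + 1) j = 1) with hb | hb <;>
      simp [hb, fromCols_mul_fromBlocks]

theorem firstCore_mul_ttProd_middleCore (k e : ℕ) :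
    firstCore A k * ttProd (fun p => ι (p + 1) ⊕ Unit) e (fun q _ => middleCore A q k) =
      prefixRow A e k := by
  induction e with
  | zero => exact (Matrix.mul_one _).trans (firstCore_eq_prefixRow A k)
  | succ e ih => rw [ttProd_succ, ← Matrix.mul_assoc, ih, prefixRow_mul_middleCore]

theorem prefixRow_mul_lastCore {e k : ℕ} (x : ℝ) (hk : k < 2 ^ (e + 2)) :
    prefixRow A e k * lastCore A e x k =
      if k = 0 then of fun _ _ => x else coreProd A (e + 2) (k - 1) := by
  have hsplit := two_pow_succ_dvd_iff (e + 1) k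
  by_cases hdvd : 2 ^ (e + 1) ∣ k
  · by_cases hbit : qttBit (e + 1) k = 0
    · have hk0 : k = 0 := Nat.eq_zero_of_dvd_of_lt (hsplit.2 ⟨hdvd, hbit⟩) hk
      subst hk0
      ext i l
      simp [prefixRow, lastCore, hbit, mul_apply]
    · obtain _ | j := k
      · simp at hbit
      have hbit' : qttBit (e + 1) (j + 1) = 1 := by omega
      rw [if_neg j.succ_ne_zero, Nat.add_sub_cancel, coreProd_eq_borrowRow A hdvd hbit']
      ext i l
      simp [prefixRow, lastCore, hdvd, hbit, mul_apply, Unique.eq_default i]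
  · obtain _ | j := k
    · simp at hdvd
    rw [if_neg j.succ_ne_zero, Nat.add_sub_cancel, coreProd_succ A (e + 1),
      ← qttBit_succ_of_not_dvd hdvd]
    ext i l
    rcases (by omega : qttBit (e + 1) (j + 1) = 0 ∨ qttBit (e + 1) (j + 1) = 1) with hb | hb <;>
      simp [prefixRow, lastCore, hdvd, hb, mul_apply]

end QTTShift

open QTTShift in
/-- QTT representation of the right shift `b = [x, a(0), …, a(2^d-2)]`:
the shifted vector has explicit QTT cores whose ranks exceed those of `a`
by at most one.  Here `d = e + 2`. -/
theorem qtt_right_shift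
    (e : ℕ)
    (ι : ℕ → Type) [∀ p, Fintype (ι p)] [∀ p, DecidableEq (ι p)]
    [Unique (ι 0)] [Unique (ι (e + 2))]
    (A : (p : ℕ) → Fin 2 → Matrix (ι p) (ι (p + 1)) ℝ)
    (a b : Fin (2 ^ (e + 2)) → ℝ) (x : ℝ)
    (ha : ∀ k : Fin (2 ^ (e + 2)),
      a k = ttProd ι (e + 2) (fun p _ => A p (qttBit p (k : ℕ))) default default)
    (hb0 : b ⟨0, by positivity⟩ = x)
    (hbs : ∀ k : ℕ, (h : k + 1 < 2 ^ (e + 2)) → b ⟨k + 1, h⟩ = a ⟨k, by omega⟩) :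
    ∀ k : Fin (2 ^ (e + 2)),
      b k =
        ((Matrix.of fun (i : ι 0) (jc : ι 1 ⊕ Unit) =>
            if qttBit 0 (k : ℕ) = 0 then
              Sum.elim (fun _ => (0 : ℝ)) (fun _ => 1) jc
            else Sum.elim (fun j => A 0 0 i j) (fun _ => 0) jc)
          * ttProd (fun p => ι (p + 1) ⊕ Unit) e (fun q _ =>
              if qttBit (q + 1) (k : ℕ) = 0 then
                Matrix.fromBlocks (A (q + 1) 0) 0 0 1
              else
                Matrix.fromBlocks (A (q + 1) 1) 0
                  (Matrix.of fun (_ : Unit) j =>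
                    ttProd ι (q + 2)
                      (fun p' _ => A p' (if p' = q + 1 then 0 else 1)) default j) 0)
          * Matrix.of fun (ic : ι (e + 1) ⊕ Unit) (j : ι (e + 2)) =>
              if qttBit (e + 1) (k : ℕ) = 0 then
                Sum.elim (fun i => A (e + 1) 0 i j) (fun _ => x) ic
              else
                Sum.elim (fun i => A (e + 1) 1 i j)
                  (fun _ => ttProd ι (e + 2)
                    (fun p' _ => A p' (if p' = e + 1 then 0 else 1)) default j) ic)
          default default := by
  rintro ⟨k, hk⟩
  change _ = (firstCore A k * ttProd _ e (fun q _ => middleCore A q k) * lastCore A e x k)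
    default default
  rw [firstCore_mul_ttProd_middleCore, prefixRow_mul_lastCore A x hk]
  rcases k with _ | j
  · simpa using hb0
  · simpa [coreProd] using (hbs j hk).trans (ha _)
end

section
/- Let 0 < α < 1, m, λ ∈ ℝ, m ≠ 0. Then y(t) = y₀ E_α(m t^α) + (λ/m) E_α(m t^α) - λ/m solves the fractional initial value problem D^α_* y(t) = m y(t) + λ with y(0) = y₀, where D^α_* is the Caputo derivative. -/
open Real

/-- The Mittag-Leffler function `E_α(z) = Σ_{j=0}^∞ z^j / Γ(jα + 1)`. -/
noncomputable def mittagLeffler (α z : ℝ) : ℝ :=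
  ∑' j : ℕ, z ^ j / Real.Gamma ((j : ℝ) * α + 1)

/-! For `u ≥ 0`, `E_α(m u^α) = Σ_j m^j u^{jα} / Γ(jα + 1)`; since `Γ(x + 1) ≥ ⌊x⌋!`
outgrows every geometric sequence, this series converges absolutely and can be differentiated
termwise for `u > 0`. By the Beta integral the Caputo derivative sends `u^β / Γ(β + 1)` to
`u^{β-α} / Γ(β - α + 1)`, so applied termwise it shifts the series by one index:
`D^α E_α(m t^α) = m E_α(m t^α)`. As `y = (y₀ + λ/m) E_α(m t^α) - λ/m` and the Caputo
derivative kills constants, `D^α y = (m y₀ + λ) E_α(m t^α) = m y + λ`. -/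

open Nat in
theorem rpow_le_mul_exp_mul_Gamma_add_one {R x : ℝ} (hR : 1 ≤ R) (hx : 1 ≤ x) :
    R ^ x ≤ R * exp R * Gamma (x + 1) := by
  set n := ⌊x⌋₊
  have hn : (1 : ℝ) ≤ n := by exact_mod_cast Nat.one_le_floor_iff x |>.mpr hx
  calc R ^ x ≤ R ^ ((n : ℝ) + 1) := rpow_le_rpow_of_exponent_le hR (Nat.lt_floor_add_one x).le
    _ = R * R ^ n := by rw [rpow_add_one (by positivity), rpow_natCast, mul_comm]
    _ ≤ R * (exp R * n !) := by
      gcongr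
      exact (div_le_iff₀ (by positivity)).mp (pow_div_factorial_le_exp R (by positivity) n)
    _ = R * exp R * Gamma (n + 1) := by rw [Gamma_nat_eq_factorial, mul_assoc]
    _ ≤ R * exp R * Gamma (x + 1) := by
      gcongr
      exact Gamma_strictMonoOn_Ici.monotoneOn (by simp only [Set.mem_Ici]; linarith)
        (by simp only [Set.mem_Ici]; linarith) (by linarith [Nat.floor_le (by linarith : 0 ≤ x)])

theorem summable_pow_div_Gamma_mul_add_one {α : ℝ} (hα : 0 < α) (r : ℝ) :
    Summable fun j : ℕ => r ^ j / Gamma (j * α + 1) := by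
  -- `R ^ (j * α) = (|r| + 1) ^ j`, so the Gamma bound makes the terms geometric of ratio
  -- `|r| / (|r| + 1)` once `j * α ≥ 1`.
  set R := (|r| + 1) ^ α⁻¹
  have hR : 1 ≤ R := one_le_rpow (by linarith [abs_nonneg r]) (by positivity)
  have hq : |r| / (|r| + 1) < 1 := (div_lt_one (by positivity)).mpr (by linarith)
  refine .of_norm_bounded_eventually_nat
    ((summable_geometric_of_lt_one (by positivity) hq).mul_left (R * exp R)) ?_
  filter_upwards [Filter.eventually_ge_atTop ⌈α⁻¹⌉₊] with j hj
  have hjα : 1 ≤ j * α := by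
    rw [← inv_mul_cancel₀ hα.ne']
    exact mul_le_mul_of_nonneg_right ((Nat.le_ceil _).trans (by exact_mod_cast hj)) hα.le
  have hΓ : 0 < Gamma (j * α + 1) := Gamma_pos_of_pos (by positivity)
  have hRj : R ^ (j * α) = (|r| + 1) ^ j := by
    rw [← rpow_mul (by positivity), show α⁻¹ * (j * α) = j by field_simp, rpow_natCast]
  rw [norm_div, norm_pow, Real.norm_eq_abs, Real.norm_of_nonneg hΓ.le]
  calc |r| ^ j / Gamma (j * α + 1)
      = (|r| / (|r| + 1)) ^ j * (|r| + 1) ^ j / Gamma (j * α + 1) := by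
        rw [div_pow, div_mul_cancel₀ _ (by positivity)]
    _ ≤ (|r| / (|r| + 1)) ^ j * (R * exp R * Gamma (j * α + 1)) / Gamma (j * α + 1) := by
        gcongr
        exact hRj ▸ rpow_le_mul_exp_mul_Gamma_add_one hR hjα
    _ = R * exp R * (|r| / (|r| + 1)) ^ j := by field_simp

theorem summable_mul_pow_div_Gamma_mul_add_one {α : ℝ} (hα : 0 < α) (r : ℝ) :
    Summable fun j : ℕ => j * r ^ j / Gamma (j * α + 1) := by
  refine .of_norm_bounded (summable_pow_div_Gamma_mul_add_one hα (2 * |r|)) fun j => ?_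
  have hΓ : 0 < Gamma (j * α + 1) := Gamma_pos_of_pos (by positivity)
  rw [norm_div, norm_mul, norm_pow, Real.norm_of_nonneg hΓ.le, Real.norm_natCast,
    Real.norm_eq_abs, mul_pow]
  gcongr
  exact_mod_cast Nat.lt_two_pow_self.le

theorem mittagLeffler_zero (α : ℝ) : mittagLeffler α 0 = 1 := by
  rw [mittagLeffler, tsum_eq_single 0 fun j hj => by simp [zero_pow hj]]
  simp

theorem mittagLeffler_mul_rpow {α : ℝ} (hα : 0 < α) (m : ℝ) {u : ℝ} (hu : 0 ≤ u) :
    mittagLeffler α (m * u ^ α)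
      = 1 + ∑' k : ℕ, m ^ (k + 1) * u ^ ((k + 1) * α) / Gamma ((k + 1) * α + 1) := by
  rw [mittagLeffler, (summable_pow_div_Gamma_mul_add_one hα _).tsum_eq_zero_add]
  congr 1
  · simp
  · congr 1 with k
    rw [mul_pow, ← rpow_natCast (u ^ α), ← rpow_mul hu]
    push_cast
    ring_nf

theorem hasDerivAt_tsum_rpow_div_Gamma {α : ℝ} (hα : 0 < α) (m : ℝ) {s : ℝ} (hs : 0 < s) :
    HasDerivAt (fun u => ∑' k : ℕ, m ^ (k + 1) * u ^ ((k + 1) * α) / Gamma ((k + 1) * α + 1))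
      (∑' k : ℕ, m ^ (k + 1) * s ^ ((k + 1) * α - 1) / Gamma ((k + 1) * α)) s := by
  have hterm (k : ℕ) {x : ℝ} (hx : 0 < x) : HasDerivAt
      (fun u => m ^ (k + 1) * u ^ ((k + 1) * α) / Gamma ((k + 1) * α + 1))
      (m ^ (k + 1) * x ^ ((k + 1) * α - 1) / Gamma ((k + 1) * α)) x := by
    have hβ : ((k : ℝ) + 1) * α ≠ 0 := by positivity
    refine (((hasDerivAt_rpow_const (p := (k + 1) * α) (Or.inl hx.ne')).const_mul
      (m ^ (k + 1))).div_const (Gamma ((k + 1) * α + 1))).congr_deriv ?_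
    rw [Gamma_add_one hβ]
    field_simp
  set r := |m| * (2 * s) ^ α
  -- On `(s / 2, 2 * s)`, `x ^ (β - 1) ≤ (2 * s) ^ β * (2 / s)`, and `1 / Γ(β) = β / Γ(β + 1)`
  -- brings in the weight `k + 1` of the dominating series.
  refine hasDerivAt_tsum_of_isPreconnected (t := Set.Ioo (s / 2) (2 * s)) (y₀ := s)
    (u := fun k : ℕ => 2 / s * α * ((k + 1 : ℕ) * r ^ (k + 1) / Gamma ((k + 1 : ℕ) * α + 1)))
    (((summable_nat_add_iff 1).mpr (summable_mul_pow_div_Gamma_mul_add_one hα r)).mul_left _)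
    isOpen_Ioo isPreconnected_Ioo (fun k x hx => hterm k (by linarith [hx.1])) ?_
    ⟨by linarith, by linarith⟩ ?_ ⟨by linarith, by linarith⟩
  · intro k x hx
    have hx0 : 0 < x := by linarith [hx.1]
    have hβ : 0 < ((k : ℝ) + 1) * α := by positivity
    calc ‖m ^ (k + 1) * x ^ ((k + 1) * α - 1) / Gamma ((k + 1) * α)‖
        = |m| ^ (k + 1) * (x ^ ((k + 1) * α) / x) / Gamma ((k + 1) * α) := by
          rw [norm_div, norm_mul, norm_pow, Real.norm_eq_abs, Real.norm_of_nonneg (by positivity),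
            Real.norm_of_nonneg (Gamma_pos_of_pos hβ).le, rpow_sub_one hx0.ne']
      _ ≤ |m| ^ (k + 1) * ((2 * s) ^ ((k + 1) * α) / (s / 2)) / Gamma ((k + 1) * α) := by
          gcongr
          · exact hx.2.le
          · exact hx.1.le
      _ = 2 / s * α * ((k + 1 : ℕ) * r ^ (k + 1) / Gamma ((k + 1 : ℕ) * α + 1)) := by
          rw [mul_pow, ← rpow_natCast ((2 * s) ^ α), ← rpow_mul (by positivity)]
          push_cast
          rw [Gamma_add_one hβ.ne']
          field_simp
  · refine ((summable_nat_add_iff 1).mpr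
      (summable_pow_div_Gamma_mul_add_one hα (m * s ^ α))).congr fun k => ?_
    rw [mul_pow, ← rpow_natCast (s ^ α), ← rpow_mul hs.le]
    push_cast
    ring_nf

theorem hasDerivAt_mittagLeffler_mul_rpow {α : ℝ} (hα : 0 < α) (m : ℝ) {s : ℝ} (hs : 0 < s) :
    HasDerivAt (fun u => mittagLeffler α (m * u ^ α))
      (∑' k : ℕ, m ^ (k + 1) * s ^ ((k + 1) * α - 1) / Gamma ((k + 1) * α)) s := by
  refine ((hasDerivAt_tsum_rpow_div_Gamma hα m hs).const_add 1).congr_of_eventuallyEq ?_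
  filter_upwards [Ioi_mem_nhds hs] with u hu
  exact mittagLeffler_mul_rpow hα m (le_of_lt hu)

open MeasureTheory

theorem intervalIntegrable_rpow_mul_rpow_sub {p q t : ℝ} (hp : 0 < p) (hq : 0 < q) (ht : 0 < t) :
    IntervalIntegrable (fun s => s ^ (p - 1) * (t - s) ^ (q - 1)) volume 0 t := by
  have hleft :
      IntervalIntegrable (fun s => s ^ (p - 1) * (t - s) ^ (q - 1)) volume 0 (t / 2) := by
    refine (intervalIntegral.intervalIntegrable_rpow' (by linarith)).mul_continuousOn ?_
    refine ContinuousOn.rpow_const (by fun_prop) fun s hs => Or.inl ?_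
    rw [Set.uIcc_of_le (by linarith)] at hs
    linarith [hs.2]
  have hright :
      IntervalIntegrable (fun s => s ^ (p - 1) * (t - s) ^ (q - 1)) volume (t / 2) t := by
    have h := (intervalIntegral.intervalIntegrable_rpow' (r := q - 1) (by linarith)).comp_sub_left
      t (a := t / 2) (b := 0)
    rw [show t - t / 2 = t / 2 by ring, sub_zero] at h
    refine h.continuousOn_mul ?_
    refine ContinuousOn.rpow_const (by fun_prop) fun s hs => Or.inl ?_
    rw [Set.uIcc_of_le (by linarith)] at hs
    linarith [hs.1]
  exact hleft.trans hright

theorem integral_rpow_mul_rpow_sub {p q t : ℝ} (hp : 0 < p) (hq : 0 < q) (ht : 0 < t) :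
    ∫ s in (0 : ℝ)..t, s ^ (p - 1) * (t - s) ^ (q - 1)
      = Gamma p * Gamma q / Gamma (p + q) * t ^ (p + q - 1) := by
  have hcpx : ((∫ s in (0 : ℝ)..t, s ^ (p - 1) * (t - s) ^ (q - 1) : ℝ) : ℂ)
      = ∫ s in (0 : ℝ)..t, (s : ℂ) ^ ((p : ℂ) - 1) * ((t : ℂ) - s) ^ ((q : ℂ) - 1) := by
    rw [← intervalIntegral.integral_ofReal]
    refine intervalIntegral.integral_congr fun s hs => ?_
    rw [Set.uIcc_of_le ht.le] at hs
    rw [Complex.ofReal_mul, Complex.ofReal_cpow hs.1, Complex.ofReal_cpow (by linarith [hs.2])]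
    push_cast
    ring_nf
  rw [Complex.betaIntegral_scaled _ _ ht,
    Complex.betaIntegral_eq_Gamma_mul_div _ _ (by simpa using hp) (by simpa using hq),
    ← Complex.ofReal_add, Complex.Gamma_ofReal, Complex.Gamma_ofReal, Complex.Gamma_ofReal,
    ← Complex.ofReal_one, ← Complex.ofReal_sub,
    ← Complex.ofReal_cpow ht.le] at hcpx
  rw [mul_comm]
  exact_mod_cast hcpx

noncomputable def caputoDeriv (α : ℝ) (f : ℝ → ℝ) (t : ℝ) : ℝ :=
  1 / Gamma (1 - α) * ∫ s in (0 : ℝ)..t, deriv f s / (t - s) ^ α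

theorem caputoDeriv_const_mul_add_const (α : ℝ) (f : ℝ → ℝ) (c d t : ℝ) :
    caputoDeriv α (fun u => c * f u + d) t = c * caputoDeriv α f t := by
  have hderiv : deriv (fun u => c * f u + d) = fun s => c * deriv f s := by
    funext s
    rw [deriv_add_const, deriv_const_mul_field']
  simp only [caputoDeriv, hderiv, mul_div_assoc, intervalIntegral.integral_const_mul]
  ring

theorem integral_caputo_mittagLeffler_term {α : ℝ} (hα0 : 0 < α) (hα1 : α < 1)
    (m : ℝ) (k : ℕ) {t : ℝ} (ht : 0 < t) :
    ∫ s in (0 : ℝ)..t,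
        m ^ (k + 1) / Gamma ((k + 1) * α) * (s ^ ((k + 1) * α - 1) * (t - s) ^ (-α))
      = Gamma (1 - α) * m * ((m * t ^ α) ^ k / Gamma (k * α + 1)) := by
  have hβ : 0 < ((k : ℝ) + 1) * α := by positivity
  have hbeta := integral_rpow_mul_rpow_sub hβ (sub_pos.mpr hα1) ht
  rw [show 1 - α - 1 = -α by ring, show (k + 1) * α + (1 - α) = k * α + 1 by ring,
    add_sub_cancel_right] at hbeta
  rw [intervalIntegral.integral_const_mul, hbeta, mul_pow, ← rpow_natCast (t ^ α),
    ← rpow_mul ht.le, mul_comm α]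
  field_simp [(Gamma_pos_of_pos hβ).ne']
  ring

theorem caputoDeriv_mittagLeffler_mul_rpow {α : ℝ} (hα0 : 0 < α) (hα1 : α < 1) (m : ℝ) {t : ℝ}
    (ht : 0 < t) :
    caputoDeriv α (fun u => mittagLeffler α (m * u ^ α)) t = m * mittagLeffler α (m * t ^ α) := by
  set F : ℝ → ℕ → ℝ → ℝ := fun m k s =>
    m ^ (k + 1) / Gamma ((k + 1) * α) * (s ^ ((k + 1) * α - 1) * (t - s) ^ (-α))
  have hF_integrable (m : ℝ) (k : ℕ) : IntegrableOn (F m k) (Set.Ioc 0 t) := by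
    have h := intervalIntegrable_rpow_mul_rpow_sub (p := (k + 1) * α) (by positivity)
      (sub_pos.mpr hα1) ht
    rw [show 1 - α - 1 = -α by ring] at h
    exact (h.const_mul _).1
  have hF_norm (k : ℕ) : ∀ s ∈ Set.Ioc 0 t, ‖F m k s‖ = F |m| k s := fun s hs => by
    have hβ : 0 < ((k : ℝ) + 1) * α := by positivity
    have hkernel : 0 ≤ s ^ ((k + 1) * α - 1) * (t - s) ^ (-α) :=
      mul_nonneg (rpow_nonneg hs.1.le _) (rpow_nonneg (by linarith [hs.2]) _)
    rw [norm_mul, norm_div, norm_pow, Real.norm_of_nonneg (Gamma_pos_of_pos hβ).le,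
      Real.norm_of_nonneg hkernel, Real.norm_eq_abs]
  have hF_integral (m : ℝ) (k : ℕ) : ∫ s in Set.Ioc 0 t, F m k s
      = Gamma (1 - α) * m * ((m * t ^ α) ^ k / Gamma (k * α + 1)) := by
    rw [← intervalIntegral.integral_of_le ht.le]
    exact integral_caputo_mittagLeffler_term hα0 hα1 m k ht
  have hF_summable : Summable fun k => ∫ s in Set.Ioc 0 t, ‖F m k s‖ := by
    simp_rw [setIntegral_congr_fun measurableSet_Ioc (hF_norm _), hF_integral]
    exact (summable_pow_div_Gamma_mul_add_one hα0 _).mul_left _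
  have hF_sum : ∀ s ∈ Set.Ioc 0 t,
      deriv (fun u => mittagLeffler α (m * u ^ α)) s / (t - s) ^ α = ∑' k, F m k s := by
    intro s hs
    rw [(hasDerivAt_mittagLeffler_mul_rpow hα0 m hs.1).deriv, div_eq_mul_inv,
      ← rpow_neg (by linarith [hs.2]), ← tsum_mul_right]
    exact tsum_congr fun k => by ring
  calc caputoDeriv α (fun u => mittagLeffler α (m * u ^ α)) t
      = 1 / Gamma (1 - α) * ∫ s in Set.Ioc 0 t, ∑' k, F m k s := by
        rw [caputoDeriv, intervalIntegral.integral_of_le ht.le,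
          setIntegral_congr_fun measurableSet_Ioc hF_sum]
    _ = 1 / Gamma (1 - α)
          * ∑' k : ℕ, Gamma (1 - α) * m * ((m * t ^ α) ^ k / Gamma (k * α + 1)) := by
        rw [← integral_tsum_of_summable_integral_norm (hF_integrable m) hF_summable]
        simp_rw [hF_integral]
    _ = m * mittagLeffler α (m * t ^ α) := by
        rw [tsum_mul_left, mittagLeffler]
        field_simp [(Gamma_pos_of_pos (sub_pos.mpr hα1)).ne']

theorem constant_forcing_solution (α m lam y0 : ℝ)
    (hα0 : 0 < α) (hα1 : α < 1) (hm : m ≠ 0)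
    (y : ℝ → ℝ)
    (hy : ∀ t : ℝ, y t = y0 * mittagLeffler α (m * t ^ α)
        + (lam / m) * mittagLeffler α (m * t ^ α) - lam / m) :
    y 0 = y0 ∧ ∀ t : ℝ, 0 < t →
      (1 / Real.Gamma (1 - α)) * ∫ s in (0 : ℝ)..t, deriv y s / (t - s) ^ α
        = m * y t + lam := by
  have hy_affine : y = fun u => (y0 + lam / m) * mittagLeffler α (m * u ^ α) + -(lam / m) :=
    funext fun u => by rw [hy]; ring
  refine ⟨by rw [hy, zero_rpow hα0.ne', mul_zero, mittagLeffler_zero]; ring, fun t ht => ?_⟩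
  change caputoDeriv α y t = _
  rw [hy_affine, caputoDeriv_const_mul_add_const, caputoDeriv_mittagLeffler_mul_rpow hα0 hα1 m ht]
  field_simp
  ring
end
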